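/- In partial type theory the universal quantifier is not definable from the existential quantifier by the classical recipe ∀ = ¬∃¬ (Fact 1, ∀-direction): for every nonempty type α there exists a partial predicate S : α → Part Bool (namely the everywhere-undefined S = fun _ => Part.none) such that the equivalence (∀ x, S x = Part.some true) ↔ ¬ (∃ x, (S x).map not = Part.some true) fails. -/
import Mathlib

theorem forall_not_definable_as_not_exists_not
    (α : Type*) [Nonempty α] :
    ∃ S : α → Part Bool, S = (fun _ => Part.none) ∧
      ¬ ((∀ x, S x = Part.some true) ↔ ¬ (∃ x, (S x).map not = Part.some true)) := by
  refine ⟨fun _ => Part.none, rfl, fun h => ?_⟩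
  obtain ⟨x⟩ := ‹Nonempty α›
  have hall := h.mpr (fun ⟨y, hy⟩ => by
    have := (Part.mem_some_iff.mpr rfl : true ∈ Part.some true)
    rw [← hy] at this
    exact Part.notMem_none _ (Part.mem_map_iff _ |>.mp this).choose_spec.1)
  have := hall x
  exact Part.some_ne_none true this.symm
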